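/- Let T ≥ 1 be an integer and Φ_T = h^T ∘ g̃. Suppose there exists an n×q real matrix K̃ such that the spectral radius of A^T (I − K̃ C) is strictly less than 1. Then the sequence Φ_T^l(0) converges as l → ∞ to a symmetric positive semidefinite matrix Σ̄ satisfying the fixed-point equation Σ̄ = h^T ∘ g̃(Σ̄). -/

import Mathlib

/-!
Both updates are monotone for the Loewner order on positive semidefinite matrices, hence so is
`Φ_T = h^T ∘ g̃`, and the iterates `Φ_T^l(0)` increase with `l`. Completing the square in the gain
shows that `g̃(X)` is the Joseph-form covariance of the optimal gain, so it is dominated by the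
Joseph form of the gain `K̃`; therefore `Φ_T(X) ≤ F X Fᵀ + M` with `F = A^T (I - K̃ C)`, and the
iterates stay below the Lyapunov series `∑ F^k M (F^k)ᵀ`, which converges because Gelfand's
formula turns `ρ(F) < 1` into geometric decay of `‖F^k‖`. An increasing bounded sequence of
symmetric matrices converges (entrywise, by polarization of its quadratic forms), and continuity of
`Φ_T` at the positive semidefinite limit makes that limit a fixed point.
-/

open Matrix Filter Topology Set
open scoped MatrixOrder NNReal ENNReal

theorem eventually_norm_pow_le_of_spectralRadius_lt_one {A : Type*} [NormedRing A]
    [NormedAlgebra ℂ A] [CompleteSpace A] {a : A} (ha : spectralRadius ℂ a < 1) :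
    ∃ ρ : ℝ, 0 ≤ ρ ∧ ρ < 1 ∧ ∀ᶠ k : ℕ in atTop, ‖a ^ k‖ ≤ ρ ^ k := by
  obtain ⟨ρ, hρa, hρ1⟩ := ENNReal.lt_iff_exists_nnreal_btwn.1 ha
  refine ⟨ρ, ρ.coe_nonneg, by exact_mod_cast hρ1, ?_⟩
  filter_upwards [(spectrum.pow_nnnorm_pow_one_div_tendsto_nhds_spectralRadius a).eventually
    (gt_mem_nhds hρa), eventually_gt_atTop 0] with k hk hk0
  rw [one_div, ENNReal.rpow_inv_lt_iff (by positivity), ENNReal.rpow_natCast] at hk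
  exact_mod_cast hk.le

theorem MonotoneOn.monotone_iterate_of_le_map {α : Type*} [Preorder α] {f : α → α} {s : Set α}
    (hf : MonotoneOn f s) (hs : MapsTo f s s) {x : α} (hx : x ∈ s) (hfx : x ≤ f x) :
    Monotone fun l ↦ f^[l] x := by
  refine monotone_nat_of_le_succ fun l ↦ ?_
  induction l with
  | zero => exact hfx
  | succ l ih =>
    calc f^[l + 1] x = f (f^[l] x) := Function.iterate_succ_apply' f l x
      _ ≤ f (f^[l + 1] x) := hf (hs.iterate l hx) (hs.iterate (l + 1) hx) ih
      _ = f^[l + 1 + 1] x := (Function.iterate_succ_apply' f (l + 1) x).symm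

namespace Matrix

variable {m n : Type*} [Fintype m] [Fintype n]

theorem isClosed_setOf_posSemidef : IsClosed {X : Matrix n n ℝ | X.PosSemidef} := by
  simp only [posSemidef_iff_dotProduct_mulVec, Set.ofPred_and, Set.ofPred_forall]
  refine (isClosed_eq (by fun_prop) continuous_id).inter (isClosed_iInter fun x ↦ ?_)
  exact isClosed_le continuous_const
    (continuous_const.dotProduct (continuous_id.matrix_mulVec continuous_const))

instance : OrderClosedTopology (Matrix n n ℝ) where
  isClosed_le' := isClosed_le_of_isClosed_nonneg <| by
    simpa only [nonneg_iff_posSemidef] using isClosed_setOf_posSemidef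

theorem mul_mul_transpose_le_mul_mul_transpose {X Y : Matrix n n ℝ} (h : X ≤ Y)
    (B : Matrix m n ℝ) : B * X * Bᵀ ≤ B * Y * Bᵀ := by
  have := (le_iff.mp h).mul_mul_conjTranspose_same B
  rwa [conjTranspose_eq_transpose_of_trivial, Matrix.mul_sub, Matrix.sub_mul, ← le_iff] at this

theorem mul_mul_transpose_nonneg {X : Matrix n n ℝ} (h : 0 ≤ X) (B : Matrix m n ℝ) :
    0 ≤ B * X * Bᵀ := by
  simpa using mul_mul_transpose_le_mul_mul_transpose h B

theorem dotProduct_mulVec_le_of_le {X Y : Matrix n n ℝ} (h : X ≤ Y) (v : n → ℝ) :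
    v ⬝ᵥ X *ᵥ v ≤ v ⬝ᵥ Y *ᵥ v := by
  simpa [sub_mulVec] using (le_iff.mp h).dotProduct_mulVec_nonneg v

theorem apply_eq_polarization [DecidableEq n] {Y : Matrix n n ℝ} (hY : Y.IsHermitian) (i j : n) :
    Y i j = ((Pi.single i 1 + Pi.single j 1) ⬝ᵥ Y *ᵥ (Pi.single i 1 + Pi.single j 1)
      - Pi.single i 1 ⬝ᵥ Y *ᵥ Pi.single i 1 - Pi.single j 1 ⬝ᵥ Y *ᵥ Pi.single j 1) / 2 := by
  have hji : Y j i = Y i j := by simpa using congrFun₂ hY i j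
  simp [mulVec_add, add_dotProduct, dotProduct_add, mulVec_single, single_dotProduct, hji]
  ring

theorem exists_tendsto_of_monotone_of_le {X : ℕ → Matrix n n ℝ} (hX : Monotone X)
    {B : Matrix n n ℝ} (hB : ∀ l, X l ≤ B) : ∃ S, Tendsto X atTop (𝓝 S) := by
  classical
  set Y := fun l ↦ X l - X 0
  have hYmono : Monotone Y := fun l l' h ↦ sub_le_sub_right (hX h) _
  have hform : ∀ v : n → ℝ, ∃ c, Tendsto (fun l ↦ v ⬝ᵥ Y l *ᵥ v) atTop (𝓝 c) := fun v ↦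
    ⟨_, tendsto_atTop_ciSup (fun l l' h ↦ dotProduct_mulVec_le_of_le (hYmono h) v)
      ⟨v ⬝ᵥ (B - X 0) *ᵥ v, forall_mem_range.2 fun l ↦
        dotProduct_mulVec_le_of_le (sub_le_sub_right (hB l) _) v⟩⟩
  choose c hc using hform
  have hY : Tendsto Y atTop (𝓝 (of fun i j ↦
      (c (Pi.single i 1 + Pi.single j 1) - c (Pi.single i 1) - c (Pi.single j 1)) / 2)) := by
    refine tendsto_pi_nhds.2 fun i ↦ tendsto_pi_nhds.2 fun j ↦ ?_
    have hherm : ∀ l, (Y l).IsHermitian := fun l ↦ (le_iff.mp (hX (Nat.zero_le l))).isHermitian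
    simp_rw [apply_eq_polarization (hherm _) i j]
    exact (((hc _).sub (hc _)).sub (hc _)).div_const 2
  exact ⟨_, by simpa [Y] using hY.add_const (X 0)⟩

section Frobenius

attribute [local instance] frobeniusNormedAddCommGroup frobeniusNormedRing frobeniusNormedAlgebra

theorem norm_apply_le_frobenius_norm (A : Matrix m n ℝ) (i : m) (j : n) : ‖A i j‖ ≤ ‖A‖ := by
  change ‖A i j‖ ≤ ‖WithLp.toLp 2 fun i ↦ WithLp.toLp 2 (A i)‖
  exact (PiLp.norm_apply_le (WithLp.toLp 2 (A i)) j).trans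
    (PiLp.norm_apply_le (WithLp.toLp 2 fun i ↦ WithLp.toLp 2 (A i)) i)

theorem summable_apply_pow_mul_mul_transpose_pow [DecidableEq n] {F : Matrix n n ℝ}
    (hF : spectralRadius ℂ (F.map Complex.ofReal) < 1) (M : Matrix n n ℝ) (i j : n) :
    Summable fun k ↦ (F ^ k * M * (F ^ k)ᵀ : Matrix n n ℝ) i j := by
  have : CompleteSpace (Matrix n n ℂ) := FiniteDimensional.complete ℂ _
  obtain ⟨ρ, hρ0, hρ1, hρ⟩ := eventually_norm_pow_le_of_spectralRadius_lt_one hF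
  refine .of_norm_bounded_eventually_nat ((summable_geometric_of_lt_one (by positivity)
    (pow_lt_one₀ hρ0 hρ1 two_ne_zero)).mul_left ‖M‖) ?_
  filter_upwards [hρ] with k hk
  have hFk : ‖F ^ k‖ ≤ ρ ^ k := by
    have e : (F ^ k).map Complex.ofReal = F.map Complex.ofReal ^ k :=
      map_pow Complex.ofRealHom.mapMatrix F k
    rwa [← frobenius_norm_map_eq _ _ Complex.norm_real, e]
  calc ‖(F ^ k * M * (F ^ k)ᵀ : Matrix n n ℝ) i j‖
      ≤ ‖F ^ k * M * (F ^ k)ᵀ‖ := norm_apply_le_frobenius_norm _ i j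
    _ ≤ ‖F ^ k‖ * ‖M‖ * ‖(F ^ k)ᵀ‖ := (frobenius_norm_mul _ _).trans
        (mul_le_mul_of_nonneg_right (frobenius_norm_mul _ _) (norm_nonneg _))
    _ = ‖M‖ * ‖F ^ k‖ ^ 2 := by rw [frobenius_norm_transpose]; ring
    _ ≤ ‖M‖ * (ρ ^ 2) ^ k := by rw [← pow_mul, mul_comm 2, pow_mul]; gcongr

end Frobenius

theorem summable_pow_mul_mul_transpose_pow [DecidableEq n] {F : Matrix n n ℝ}
    (hF : spectralRadius ℂ (F.map Complex.ofReal) < 1) (M : Matrix n n ℝ) :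
    Summable fun k ↦ F ^ k * M * (F ^ k)ᵀ :=
  Pi.summable.2 fun i ↦ Pi.summable.2 fun j ↦ summable_apply_pow_mul_mul_transpose_pow hF M i j

theorem iterate_le_sum_pow_mul_mul_transpose_pow [DecidableEq n] {f : Matrix n n ℝ → Matrix n n ℝ}
    (hf : MapsTo f (Ici 0) (Ici 0)) {F M : Matrix n n ℝ} (hle : ∀ X, 0 ≤ X → f X ≤ F * X * Fᵀ + M)
    (l : ℕ) : f^[l] 0 ≤ ∑ k ∈ Finset.range l, F ^ k * M * (F ^ k)ᵀ := by
  induction l with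
  | zero => simp
  | succ l ih =>
    have hsum : ∑ k ∈ Finset.range (l + 1), F ^ k * M * (F ^ k)ᵀ
        = F * (∑ k ∈ Finset.range l, F ^ k * M * (F ^ k)ᵀ) * Fᵀ + M := by
      simp only [Finset.sum_range_succ', Finset.mul_sum, Finset.sum_mul, pow_succ', transpose_mul,
        pow_zero, transpose_one, Matrix.mul_one, Matrix.one_mul, Matrix.mul_assoc]
    rw [Function.iterate_succ_apply', hsum]
    exact (hle _ (hf.iterate l self_mem_Ici)).trans
      (add_le_add_left (mul_mul_transpose_le_mul_mul_transpose ih F) M)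

end Matrix

namespace Kalman

noncomputable section

variable {m n : Type*} [Fintype m] [Fintype n]

def timeUpdate (A Q X : Matrix n n ℝ) : Matrix n n ℝ := A * X * Aᵀ + Q

section TimeUpdate

variable {A Q : Matrix n n ℝ}

theorem monotone_timeUpdate : Monotone (timeUpdate A Q) := fun _ _ h ↦
  add_le_add_left (mul_mul_transpose_le_mul_mul_transpose h A) Q

theorem mapsTo_timeUpdate (hQ : 0 ≤ Q) : MapsTo (timeUpdate A Q) (Ici 0) (Ici 0) := fun _ hX ↦
  add_nonneg (mul_mul_transpose_nonneg hX A) hQ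

theorem continuous_timeUpdate : Continuous (timeUpdate A Q) := by
  unfold timeUpdate; fun_prop

theorem timeUpdate_iterate_apply [DecidableEq n] (k : ℕ) (X : Matrix n n ℝ) :
    (timeUpdate A Q)^[k] X = A ^ k * X * (A ^ k)ᵀ + (timeUpdate A Q)^[k] 0 := by
  induction k generalizing X with
  | zero => simp
  | succ k ih =>
    simp only [Function.iterate_succ_apply', ih X, timeUpdate, pow_succ', transpose_mul,
      Matrix.mul_add, Matrix.add_mul, Matrix.mul_assoc]
    abel

end TimeUpdate

variable {X Y : Matrix n n ℝ} {C : Matrix m n ℝ} {R : Matrix m m ℝ}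

theorem posDef_innovation (hR : R.PosDef) (hX : 0 ≤ X) : (C * X * Cᵀ + R).PosDef :=
  hR.posSemidef_add (mul_mul_transpose_nonneg hX C).posSemidef

/-- The error covariance after a measurement update with an arbitrary gain `K`. -/
def josephForm [DecidableEq n] (C : Matrix m n ℝ) (R : Matrix m m ℝ) (K : Matrix n m ℝ)
    (X : Matrix n n ℝ) : Matrix n n ℝ :=
  (1 - K * C) * X * (1 - K * C)ᵀ + K * R * Kᵀ

theorem monotone_josephForm [DecidableEq n] (K : Matrix n m ℝ) :
    Monotone (josephForm C R K) := fun _ _ h ↦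
  add_le_add_left (mul_mul_transpose_le_mul_mul_transpose h _) _

variable [DecidableEq m]

def measurementUpdate (C : Matrix m n ℝ) (R : Matrix m m ℝ) (X : Matrix n n ℝ) : Matrix n n ℝ :=
  X - X * Cᵀ * (C * X * Cᵀ + R)⁻¹ * C * X

def kalmanGain (C : Matrix m n ℝ) (R : Matrix m m ℝ) (X : Matrix n n ℝ) : Matrix n m ℝ :=
  X * Cᵀ * (C * X * Cᵀ + R)⁻¹

theorem continuousAt_measurementUpdate (hR : R.PosDef) (hX : 0 ≤ X) :
    ContinuousAt (measurementUpdate C R) X := by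
  have hdet : (C * X * Cᵀ + R).det ≠ 0 := (posDef_innovation hR hX).det_pos.ne'
  have hinv : ContinuousAt (fun Y : Matrix n n ℝ ↦ (C * Y * Cᵀ + R)⁻¹) X :=
    (continuousAt_matrix_inv _ (by rw [Ring.inverse_eq_inv']; exact continuousAt_inv₀ hdet)).comp
      (by fun_prop : Continuous fun Y : Matrix n n ℝ ↦ C * Y * Cᵀ + R).continuousAt
  unfold measurementUpdate
  fun_prop

theorem measurementUpdate_eq_sub_kalmanGain_mul :
    measurementUpdate C R X = X - kalmanGain C R X * C * X := rfl

variable [DecidableEq n]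

theorem josephForm_eq (hR : R.PosDef) (hX : 0 ≤ X) (K : Matrix n m ℝ) :
    josephForm C R K X = measurementUpdate C R X
      + (K - kalmanGain C R X) * (C * X * Cᵀ + R) * (K - kalmanGain C R X)ᵀ := by
  have hS := posDef_innovation (C := C) hR hX
  have hXT : Xᵀ = X := by simpa using hX.posSemidef.isHermitian.eq
  have hST : (C * X * Cᵀ + R)ᵀ = C * X * Cᵀ + R := by simpa using hS.isHermitian.eq
  rw [measurementUpdate_eq_sub_kalmanGain_mul]
  set S := C * X * Cᵀ + R
  set L := kalmanGain C R X
  have hLS : L * S = X * Cᵀ := by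
    rw [show L = X * Cᵀ * S⁻¹ from rfl, Matrix.mul_assoc,
      nonsing_inv_mul S ((isUnit_iff_isUnit_det S).1 hS.isUnit), Matrix.mul_one]
  have hSL : S * Lᵀ = C * X := by
    simpa [transpose_mul, hST, hXT] using congrArg transpose hLS
  have hLS' : ∀ M : Matrix m n ℝ, L * (S * M) = X * (Cᵀ * M) := fun M ↦ by
    rw [← Matrix.mul_assoc, hLS, Matrix.mul_assoc]
  have hR' : R = S - C * X * Cᵀ := by simp [S]
  simp only [josephForm, hR', transpose_sub, transpose_mul, transpose_one, Matrix.sub_mul,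
    Matrix.mul_sub, Matrix.one_mul, Matrix.mul_one, Matrix.mul_assoc, hSL, hLS']
  abel

theorem josephForm_kalmanGain (hR : R.PosDef) (hX : 0 ≤ X) :
    josephForm C R (kalmanGain C R X) X = measurementUpdate C R X := by
  simp [josephForm_eq hR hX]

theorem measurementUpdate_le_josephForm (hR : R.PosDef) (hX : 0 ≤ X) (K : Matrix n m ℝ) :
    measurementUpdate C R X ≤ josephForm C R K X := by
  rw [josephForm_eq hR hX]
  exact le_add_of_nonneg_right
    (mul_mul_transpose_nonneg (posDef_innovation hR hX).posSemidef.nonneg _)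

theorem measurementUpdate_nonneg (hR : R.PosDef) (hX : 0 ≤ X) :
    0 ≤ measurementUpdate C R X := by
  rw [← josephForm_kalmanGain hR hX]
  exact add_nonneg (mul_mul_transpose_nonneg hX _)
    (mul_mul_transpose_nonneg hR.posSemidef.nonneg _)

theorem measurementUpdate_mono (hR : R.PosDef) (hX : 0 ≤ X) (hXY : X ≤ Y) :
    measurementUpdate C R X ≤ measurementUpdate C R Y := by
  rw [← josephForm_kalmanGain hR (hX.trans hXY)]
  exact (measurementUpdate_le_josephForm hR hX _).trans (monotone_josephForm _ hXY)

def riccatiMap (A Q : Matrix n n ℝ) (C : Matrix m n ℝ) (R : Matrix m m ℝ) (T : ℕ) :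
    Matrix n n ℝ → Matrix n n ℝ :=
  (timeUpdate A Q)^[T] ∘ measurementUpdate C R

variable {A Q : Matrix n n ℝ}

theorem mapsTo_riccatiMap (hQ : 0 ≤ Q) (hR : R.PosDef) (T : ℕ) :
    MapsTo (riccatiMap A Q C R T) (Ici 0) (Ici 0) :=
  ((mapsTo_timeUpdate hQ).iterate T).comp fun _ ↦ measurementUpdate_nonneg hR

theorem monotoneOn_riccatiMap (hR : R.PosDef) (T : ℕ) :
    MonotoneOn (riccatiMap A Q C R T) (Ici 0) := fun _ hX _ _ hXY ↦
  monotone_timeUpdate.iterate T (measurementUpdate_mono hR hX hXY)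

/-- The optimal gain does at least as well as the gain `K`. -/
theorem riccatiMap_le_lyapunov (hR : R.PosDef) (hX : 0 ≤ X) (T : ℕ) (K : Matrix n m ℝ) :
    riccatiMap A Q C R T X
      ≤ (A ^ T * (1 - K * C)) * X * (A ^ T * (1 - K * C))ᵀ
        + (A ^ T * (K * R * Kᵀ) * (A ^ T)ᵀ + (timeUpdate A Q)^[T] 0) := by
  refine (monotone_timeUpdate.iterate T (measurementUpdate_le_josephForm hR hX K)).trans_eq ?_
  rw [timeUpdate_iterate_apply]
  simp only [josephForm, transpose_mul, Matrix.mul_add, Matrix.add_mul, Matrix.mul_assoc]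
  abel

theorem exists_riccatiMap_iterate_le (hQ : 0 ≤ Q) (hR : R.PosDef) (T : ℕ) {K : Matrix n m ℝ}
    (hK : spectralRadius ℂ ((A ^ T * (1 - K * C)).map Complex.ofReal) < 1) :
    ∃ B, ∀ l, (riccatiMap A Q C R T)^[l] 0 ≤ B := by
  have hM : 0 ≤ A ^ T * (K * R * Kᵀ) * (A ^ T)ᵀ + (timeUpdate A Q)^[T] 0 :=
    add_nonneg (mul_mul_transpose_nonneg (mul_mul_transpose_nonneg hR.posSemidef.nonneg K) _)
      ((mapsTo_timeUpdate hQ).iterate T self_mem_Ici)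
  refine ⟨_, fun l ↦ (iterate_le_sum_pow_mul_mul_transpose_pow
    (mapsTo_riccatiMap hQ hR T) (fun X hX ↦ riccatiMap_le_lyapunov hR hX T K) l).trans
    ((summable_pow_mul_mul_transpose_pow hK _).sum_le_tsum _
      fun k _ ↦ mul_mul_transpose_nonneg hM _)⟩

end

end Kalman

open Kalman

theorem stmt_10_general {n q : ℕ} (A : Matrix (Fin n) (Fin n) ℝ) (C : Matrix (Fin q) (Fin n) ℝ)
    (Q : Matrix (Fin n) (Fin n) ℝ) (hQ : Q.PosSemidef)
    (R : Matrix (Fin q) (Fin q) ℝ) (hR : R.PosDef)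
    (h gt : Matrix (Fin n) (Fin n) ℝ → Matrix (Fin n) (Fin n) ℝ)
    (hh : ∀ X, h X = A * X * Aᵀ + Q)
    (hgt : ∀ X, gt X = X - X * Cᵀ * (C * X * Cᵀ + R)⁻¹ * C * X)
    (T : ℕ)
    (Kt : Matrix (Fin n) (Fin q) ℝ)
    (hKt : spectralRadius ℂ ((A ^ T * (1 - Kt * C)).map Complex.ofReal) < 1) :
    ∃ Sbar : Matrix (Fin n) (Fin n) ℝ, Sbar.PosSemidef ∧
      Tendsto (fun l : ℕ => (h^[T] ∘ gt)^[l] 0) atTop (nhds Sbar) ∧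
      Sbar = h^[T] (gt Sbar) := by
  obtain rfl : h = timeUpdate A Q := funext hh
  obtain rfl : gt = measurementUpdate C R := funext hgt
  have hmaps : MapsTo (riccatiMap A Q C R T) (Ici 0) (Ici 0) := mapsTo_riccatiMap hQ.nonneg hR T
  have hmono : Monotone fun l ↦ (riccatiMap A Q C R T)^[l] 0 :=
    (monotoneOn_riccatiMap hR T).monotone_iterate_of_le_map hmaps self_mem_Ici (hmaps self_mem_Ici)
  obtain ⟨B, hB⟩ := exists_riccatiMap_iterate_le hQ.nonneg hR T hKt
  obtain ⟨S, hS⟩ := exists_tendsto_of_monotone_of_le hmono hB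
  have hS0 : 0 ≤ S := hmono.ge_of_tendsto hS 0
  refine ⟨S, hS0.posSemidef, hS, (isFixedPt_of_tendsto_iterate hS ?_).symm⟩
  exact (continuous_timeUpdate.iterate T).continuousAt.comp (continuousAt_measurementUpdate hR hS0)

/-- Under detectability of `(C, A^T)`, the iterates `Φ_T^l(0)` converge to a
symmetric positive semidefinite fixed point `Σ̄` of `h^T ∘ g̃`. -/
theorem stmt_10 {n q : ℕ} (A : Matrix (Fin n) (Fin n) ℝ) (C : Matrix (Fin q) (Fin n) ℝ)
    (Q : Matrix (Fin n) (Fin n) ℝ) (hQ : Q.PosSemidef)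
    (R : Matrix (Fin q) (Fin q) ℝ) (hR : R.PosDef)
    (h gt : Matrix (Fin n) (Fin n) ℝ → Matrix (Fin n) (Fin n) ℝ)
    (hh : ∀ X, h X = A * X * Aᵀ + Q)
    (hgt : ∀ X, gt X = X - X * Cᵀ * (C * X * Cᵀ + R)⁻¹ * C * X)
    (T : ℕ) (hT : 1 ≤ T)
    (Kt : Matrix (Fin n) (Fin q) ℝ)
    (hKt : spectralRadius ℂ ((A ^ T * (1 - Kt * C)).map Complex.ofReal) < 1) :
    ∃ Sbar : Matrix (Fin n) (Fin n) ℝ, Sbar.PosSemidef ∧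
      Tendsto (fun l : ℕ => (h^[T] ∘ gt)^[l] 0) atTop (nhds Sbar) ∧
      Sbar = h^[T] (gt Sbar) :=
  stmt_10_general A C Q hQ R hR h gt hh hgt T Kt hKt
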